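/- arXiv:2511.06750 — 6 statements merged into one kernel-verified Lean document; each statement's English description precedes it below -/
import Mathlib

section
/- Let H be a Hermitian n×n matrix with spectral decomposition H = Σ_λ λ E_λ and let S, T be equal-size subsets of {1,…,n}. Then tr((E_λ)_{S,S}) = tr((E_λ)_{T,T}) for every eigenvalue λ if and only if tr((H^m)_{S,S}) = tr((H^m)_{T,T}) for every nonnegative integer m. -/
open Matrix

/-- `tr((E_λ)_{S,S}) = tr((E_λ)_{T,T})` for every eigenvalue `λ` if and only if
`tr((H^m)_{S,S}) = tr((H^m)_{T,T})` for every nonnegative integer `m`. -/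
theorem stmt_7 {n Λ : Type*} [Fintype n] [Fintype Λ] [DecidableEq n] {d : ℕ}
    (E : Λ → Matrix n n ℂ)
    (hHerm : ∀ l, (E l).IsHermitian)
    (hIdem : ∀ l, E l * E l = E l)
    (hOrth : ∀ l l', l ≠ l' → E l * E l' = 0)
    (hSum : ∑ l, E l = 1)
    (ev : Λ → ℝ) (hev : Function.Injective ev)
    (H : Matrix n n ℂ) (hHdef : H = ∑ l, (ev l : ℂ) • E l)
    (fS fT : Fin d → n) (hS : Function.Injective fS) (hT : Function.Injective fT) :
    (∀ l, ((E l).submatrix fS fS).trace = ((E l).submatrix fT fT).trace) ↔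
      (∀ m : ℕ, ((H ^ m).submatrix fS fS).trace = ((H ^ m).submatrix fT fT).trace) := by
  classical
  -- H^m = ∑ l, (ev l)^m • E l
  have hpow : ∀ m : ℕ, H ^ m = ∑ l, ((ev l : ℂ) ^ m) • E l := by
    intro m
    induction m with
    | zero => simp [hSum]
    | succ m ih =>
      rw [pow_succ, ih, hHdef, Finset.sum_mul_sum]
      refine Finset.sum_congr rfl fun l _ => ?_
      refine (Finset.sum_eq_single l (fun l' _ hne => ?_) (by simp)).trans ?_
      · rw [smul_mul_smul_comm, hOrth l l' hne.symm, smul_zero]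
      · rw [smul_mul_smul_comm, hIdem, ← pow_succ]
  -- trace of submatrix of a linear combination
  have key : ∀ (c : Λ → ℂ) (f : Fin d → n),
      ((∑ l, c l • E l).submatrix f f).trace = ∑ l, c l * ((E l).submatrix f f).trace := by
    intro c f
    simp only [Matrix.trace, Matrix.diag, Matrix.submatrix_apply, Matrix.sum_apply,
      Matrix.smul_apply, smul_eq_mul, Finset.mul_sum]
    exact Finset.sum_comm
  constructor
  · intro h m
    rw [hpow m, key, key]
    exact Finset.sum_congr rfl fun l _ => by rw [h l]
  · intro h l0
    set xs : Λ → ℂ := fun l => ((E l).submatrix fS fS).trace with hxs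
    set xt : Λ → ℂ := fun l => ((E l).submatrix fT fT).trace with hxt
    have hmom : ∀ m : ℕ, ∑ l, (ev l : ℂ) ^ m * xs l = ∑ l, (ev l : ℂ) ^ m * xt l := by
      intro m
      have := h m
      rwa [hpow m, key, key] at this
    set v : Λ → ℂ := fun l => ((ev l : ℝ) : ℂ) with hv
    have hvinj : Set.InjOn v (Finset.univ : Finset Λ) := fun a _ b _ hab => by
      exact hev (Complex.ofReal_injective hab)
    -- polynomial moment identity
    have hpoly : ∀ p : Polynomial ℂ,
        ∑ l, p.eval (v l) * xs l = ∑ l, p.eval (v l) * xt l := by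
      intro p
      have expand : ∀ (x : Λ → ℂ),
          ∑ l, p.eval (v l) * x l
            = ∑ i ∈ Finset.range (p.natDegree + 1), p.coeff i * ∑ l, (v l) ^ i * x l := by
        intro x
        simp_rw [Polynomial.eval_eq_sum_range, Finset.sum_mul, Finset.mul_sum, mul_assoc]
        exact Finset.sum_comm
      rw [expand, expand]
      exact Finset.sum_congr rfl fun i _ => by rw [hmom i]
    have := hpoly (Lagrange.basis Finset.univ v l0)
    have eval_eq : ∀ (x : Λ → ℂ),
        ∑ l, (Lagrange.basis Finset.univ v l0).eval (v l) * x l = x l0 := by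
      intro x
      refine (Finset.sum_eq_single l0 (fun l _ hne => ?_) (by simp)).trans ?_
      · rw [Lagrange.eval_basis_of_ne hne.symm (Finset.mem_univ l), zero_mul]
      · rw [Lagrange.eval_basis_self hvinj (Finset.mem_univ l0), one_mul]
    rw [eval_eq, eval_eq] at this
    exact this
end

section
/- Let H be a Hermitian matrix, Δ an invertible diagonal matrix such that M = ΔHΔ^{-1} has rational entries, and S = {a_1,…,a_d}, T = {b_1,…,b_d} equal-size index subsets such that Δ_{a_j,a_j} · (Δ_{b_j,b_j})^{-1} ∈ ℚ for all j. Then ψ_{S,T}(x) = Σ_j ((xI - H)^{-1})_{a_j, b_j} is a rational function over ℚ, i.e., both the numerator Σ_j adj(xI - H)_{a_j, b_j} and denominator det(xI - H) are polynomials with rational coefficients. -/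
/-!
Write `D = diagonal δ`, so `H = D⁻¹ M D` with `M` rational. Conjugating `H` by `D` conjugates the
characteristic matrix `xI - H` by the constant matrix `D`, which leaves its determinant unchanged
and turns its adjugate into `D⁻¹ adj(xI - M) D`. Hence `det(xI - H) = det(xI - M) ∈ ℚ[x]`, and the
`(a_j, b_j)` entry of `adj(xI - H)` is `δ(b_j) / δ(a_j) ∈ ℚ` times the rational polynomial
`adj(xI - M)_{a_j, b_j}`.
-/

open Matrix Polynomial

namespace Matrix

variable {n R : Type*} [Fintype n] [DecidableEq n] [CommRing R]

theorem map_mul_map_eq_one {S : Type*} [CommRing S] {P Q : Matrix n n R} (hQP : Q * P = 1)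
    (f : R →+* S) : Q.map f * P.map f = 1 := by
  rw [← Matrix.map_mul, hQP, Matrix.map_one f (map_zero f) (map_one f)]

theorem adjugate_conj_of_mul_eq_one {P Q : Matrix n n R} (hQP : Q * P = 1) (A : Matrix n n R) :
    adjugate (Q * A * P) = Q * adjugate A * P := by
  have hPQ : P * Q = 1 := mul_eq_one_comm.mp hQP
  have hadjP : adjugate P = P.det • Q := calc
    adjugate P = adjugate P * P * Q := by rw [Matrix.mul_assoc, hPQ, Matrix.mul_one]
    _ = P.det • Q := by rw [adjugate_mul, smul_mul, Matrix.one_mul]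
  have hadjQ : adjugate Q = Q.det • P := calc
    adjugate Q = adjugate Q * Q * P := by rw [Matrix.mul_assoc, hQP, Matrix.mul_one]
    _ = Q.det • P := by rw [adjugate_mul, smul_mul, Matrix.one_mul]
  have hdet : Q.det * P.det = 1 := by rw [← det_mul, hQP, det_one]
  rw [adjugate_mul_distrib, adjugate_mul_distrib, hadjP, hadjQ, Matrix.mul_smul, Matrix.mul_smul,
    smul_mul, smul_smul, hdet, one_smul, Matrix.mul_assoc]

theorem charmatrix_conj_of_mul_eq_one {P Q : Matrix n n R} (hQP : Q * P = 1) (A : Matrix n n R) :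
    charmatrix (Q * A * P) = Q.map C * charmatrix A * P.map C := by
  simp only [charmatrix, RingHom.mapMatrix_apply, Matrix.map_mul, Matrix.mul_sub, Matrix.sub_mul]
  congr 1
  rw [← (scalar_commute (X : R[X]) (fun _ => Commute.all _ _) (Q.map C)).eq, Matrix.mul_assoc,
    map_mul_map_eq_one hQP, Matrix.mul_one]

theorem charpoly_conj_of_mul_eq_one {P Q : Matrix n n R} (hQP : Q * P = 1) (A : Matrix n n R) :
    (Q * A * P).charpoly = A.charpoly := by
  have hmap := map_mul_map_eq_one hQP C
  rw [charpoly, charmatrix_conj_of_mul_eq_one hQP,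
    det_conj_of_mul_eq_one hmap (mul_eq_one_comm.mp hmap), charpoly]

theorem adjugate_charmatrix_conj_of_mul_eq_one {P Q : Matrix n n R} (hQP : Q * P = 1)
    (A : Matrix n n R) :
    adjugate (charmatrix (Q * A * P)) = Q.map C * adjugate (charmatrix A) * P.map C := by
  rw [charmatrix_conj_of_mul_eq_one hQP, adjugate_conj_of_mul_eq_one (map_mul_map_eq_one hQP C)]

theorem adjugate_charmatrix_map {S : Type*} [CommRing S] (A : Matrix n n R) (f : R →+* S) :
    adjugate (charmatrix (A.map f)) = (adjugate (charmatrix A)).map (Polynomial.map f) := by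
  rw [charmatrix_map, ← Polynomial.coe_mapRingHom, ← RingHom.mapMatrix_apply,
    ← RingHom.map_adjugate, RingHom.mapMatrix_apply]

end Matrix

theorem Polynomial.exists_coeff_map_ratCast {K : Type*} [DivisionRing K] [CharZero K] (p : ℚ[X])
    (k : ℕ) : ∃ q : ℚ, (p.map (Rat.castHom K)).coeff k = q :=
  ⟨p.coeff k, by rw [coeff_map, eq_ratCast]⟩

theorem stmt_10_general {n : Type*} [Fintype n] [DecidableEq n] {d : ℕ}
    (H : Matrix n n ℂ)
    (δ : n → ℂ) (hδ : ∀ i, δ i ≠ 0)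
    (hrat : ∀ i j, ∃ q : ℚ,
      (Matrix.diagonal δ * H * (Matrix.diagonal δ)⁻¹) i j = (q : ℂ))
    (a b : Fin d → n)
    (hab : ∀ j, ∃ q : ℚ, δ (a j) * (δ (b j))⁻¹ = (q : ℂ)) :
    (∀ k : ℕ, ∃ q : ℚ, ((Matrix.charmatrix H).det).coeff k = (q : ℂ)) ∧
    (∀ k : ℕ, ∃ q : ℚ,
      (∑ j, (Matrix.charmatrix H).adjugate (a j) (b j)).coeff k = (q : ℂ)) := by
  choose M hM using hrat
  choose q hq using hab
  have hδδ : diagonal δ⁻¹ * diagonal δ = 1 := by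
    rw [diagonal_mul_diagonal, ← diagonal_one]
    exact congrArg diagonal (funext fun i => inv_mul_cancel₀ (hδ i))
  have hH : H = diagonal δ⁻¹ * (of M).map (Rat.castHom ℂ) * diagonal δ := by
    have hconj : diagonal δ * H * diagonal δ⁻¹ = (of M).map (Rat.castHom ℂ) :=
      ext fun i j => by simpa [inv_eq_left_inv hδδ] using hM i j
    rw [← hconj, Matrix.mul_assoc, Matrix.mul_assoc, hδδ, Matrix.mul_one, ← Matrix.mul_assoc, hδδ,
      Matrix.one_mul]
  have hdet : (charmatrix H).det = (of M).charpoly.map (Rat.castHom ℂ) := by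
    rw [← charpoly, hH, charpoly_conj_of_mul_eq_one hδδ, charpoly_map]
  have hψ : ∑ j, (charmatrix H).adjugate (a j) (b j) =
      (∑ j, C (q j)⁻¹ * (charmatrix (of M)).adjugate (a j) (b j)).map (Rat.castHom ℂ) := by
    rw [hH, adjugate_charmatrix_conj_of_mul_eq_one hδδ, adjugate_charmatrix_map, Polynomial.map_sum]
    refine Finset.sum_congr rfl fun j _ => ?_
    have hratio : (δ (a j))⁻¹ * δ (b j) = (q j : ℂ)⁻¹ := by rw [← hq j, mul_inv, inv_inv]
    simp only [diagonal_map (map_zero C), diagonal_mul, mul_diagonal, Matrix.map_apply,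
      Polynomial.map_mul, map_C]
    rw [mul_right_comm, ← C_mul, Pi.inv_apply, hratio, eq_ratCast, Rat.cast_inv]
  exact ⟨fun k => hdet ▸ exists_coeff_map_ratCast _ k, fun k => hψ ▸ exists_coeff_map_ratCast _ k⟩

/-- If `Δ H Δ⁻¹` has rational entries and `Δ_{a_j,a_j} Δ_{b_j,b_j}⁻¹ ∈ ℚ`,
then `ψ_{S,T}(x)` is a rational function over `ℚ`: both `det(xI - H)` and
`Σ_j adj(xI - H)_{a_j, b_j}` have rational coefficients. -/
theorem stmt_10 {n : Type*} [Fintype n] [DecidableEq n] {d : ℕ}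
    (H : Matrix n n ℂ) (hH : H.IsHermitian)
    (δ : n → ℂ) (hδ : ∀ i, δ i ≠ 0)
    (hrat : ∀ i j, ∃ q : ℚ,
      (Matrix.diagonal δ * H * (Matrix.diagonal δ)⁻¹) i j = (q : ℂ))
    (a b : Fin d → n) (ha : Function.Injective a) (hb : Function.Injective b)
    (hab : ∀ j, ∃ q : ℚ, δ (a j) * (δ (b j))⁻¹ = (q : ℂ)) :
    (∀ k : ℕ, ∃ q : ℚ, ((Matrix.charmatrix H).det).coeff k = (q : ℂ)) ∧
    (∀ k : ℕ, ∃ q : ℚ,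
      (∑ j, (Matrix.charmatrix H).adjugate (a j) (b j)).coeff k = (q : ℂ)) :=
  stmt_10_general H δ hδ hrat a b hab
end

section
/- For every natural number m ≥ 2, m ≤ 3·φ(m)^{3/2}, where φ is Euler's totient function. -/
/-!
Write `m = 2^a 3^b s` with `s` coprime to `6`. For a prime power, `(p^k)^2 (p-1)^3 ≤ p^2 φ(p^k)^3`,
so `(p^k)^2 ≤ c φ(p^k)^3` as soon as `p^2 ≤ c (p-1)^3`: with `c = 1` for `p ≥ 5`, `c = 2` for `p = 3`
and `c = 4` for `p = 2`. These bounds multiply over coprime factors, giving `m^2 ≤ 8 φ(m)^3`, and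
taking square roots gives `m ≤ √8 φ(m)^{3/2} ≤ 3 φ(m)^{3/2}`.
-/

open Nat

theorem Nat.prime_pow_sq_le_mul_totient_pow_three {p c : ℕ} (hp : p.Prime)
    (hc : p ^ 2 ≤ c * (p - 1) ^ 3) (k : ℕ) : (p ^ k) ^ 2 ≤ c * φ (p ^ k) ^ 3 := by
  rcases Nat.eq_zero_or_pos k with rfl | hk
  · have hc : 1 ≤ c := Nat.pos_of_ne_zero fun h => by simp [h, hp.ne_zero] at hc
    simpa using hc
  rw [Nat.totient_prime_pow hp hk]
  have hp1 : 0 < (p - 1) ^ 3 := pow_pos (Nat.sub_pos_of_lt hp.one_lt) 3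
  refine Nat.le_of_mul_le_mul_right ?_ hp1
  calc (p ^ k) ^ 2 * (p - 1) ^ 3 ≤ p ^ (3 * (k - 1)) * p ^ 2 * (p - 1) ^ 3 := by
        gcongr
        rw [← pow_mul, ← pow_add]
        exact Nat.pow_le_pow_right hp.pos (by omega)
    _ ≤ p ^ (3 * (k - 1)) * (c * (p - 1) ^ 3) * (p - 1) ^ 3 := by gcongr
    _ = c * (p ^ (k - 1) * (p - 1)) ^ 3 * (p - 1) ^ 3 := by ring

theorem Nat.mul_sq_le_mul_totient_pow_three {a b c d : ℕ} (hab : a.Coprime b)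
    (ha : a ^ 2 ≤ c * φ a ^ 3) (hb : b ^ 2 ≤ d * φ b ^ 3) :
    (a * b) ^ 2 ≤ c * d * φ (a * b) ^ 3 := by
  rw [Nat.totient_mul hab]
  calc (a * b) ^ 2 = a ^ 2 * b ^ 2 := mul_pow a b 2
    _ ≤ c * φ a ^ 3 * (d * φ b ^ 3) := Nat.mul_le_mul ha hb
    _ = c * d * (φ a * φ b) ^ 3 := by ring

theorem Nat.sq_le_totient_pow_three_of_coprime_six {n : ℕ} (hn : n.Coprime 6) :
    n ^ 2 ≤ φ n ^ 3 := by
  induction n using Nat.recOnPosPrimePosCoprime with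
  | zero => simp at hn
  | one => simp
  | prime_pow p k hp hk =>
    have hp5 : 5 ≤ p := by
      have hp6 : p.Coprime 6 := Nat.Coprime.coprime_dvd_left (dvd_pow_self p hk.ne') hn
      by_contra! hp5
      have := hp.two_le
      interval_cases p <;> simp_all +decide
    have hc : p ^ 2 ≤ 1 * (p - 1) ^ 3 := by
      obtain ⟨q, rfl⟩ : ∃ q, p = q + 1 := ⟨p - 1, by omega⟩
      simp only [Nat.add_sub_cancel, one_mul]
      nlinarith
    simpa using Nat.prime_pow_sq_le_mul_totient_pow_three hp hc k
  | coprime a b _ _ hab iha ihb =>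
    simpa using Nat.mul_sq_le_mul_totient_pow_three (c := 1) (d := 1) hab
      (by simpa using iha (Nat.Coprime.coprime_dvd_left (dvd_mul_right a b) hn))
      (by simpa using ihb (Nat.Coprime.coprime_dvd_left (dvd_mul_left b a) hn))

theorem Nat.sq_le_mul_totient_pow_three_of_ordCompl {p c d n : ℕ} (hp : p.Prime)
    (hc : p ^ 2 ≤ c * (p - 1) ^ 3) (hn : n ≠ 0)
    (h : (ordCompl[p] n) ^ 2 ≤ d * φ (ordCompl[p] n) ^ 3) : n ^ 2 ≤ c * d * φ n ^ 3 := by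
  have hcop : (ordProj[p] n).Coprime (ordCompl[p] n) :=
    (Nat.coprime_ordCompl hp hn).pow_left _
  simpa only [Nat.ordProj_mul_ordCompl_eq_self] using
    Nat.mul_sq_le_mul_totient_pow_three hcop
      (Nat.prime_pow_sq_le_mul_totient_pow_three hp hc _) h

theorem Nat.sq_le_eight_mul_totient_pow_three (n : ℕ) : n ^ 2 ≤ 8 * φ n ^ 3 := by
  rcases eq_or_ne n 0 with rfl | hn
  · simp
  set t := ordCompl[2] n
  have ht0 : t ≠ 0 := (Nat.ordCompl_pos 2 hn).ne'
  have hs6 : (ordCompl[3] t).Coprime 6 := by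
    have hs2 : (ordCompl[3] t).Coprime 2 :=
      ((Nat.coprime_ordCompl Nat.prime_two hn).symm).coprime_dvd_left (Nat.ordCompl_dvd t 3)
    exact (show 6 = 2 * 3 from rfl) ▸
      hs2.mul_right (Nat.coprime_ordCompl Nat.prime_three ht0).symm
  have hs := Nat.sq_le_totient_pow_three_of_coprime_six hs6
  have hodd : t ^ 2 ≤ 2 * 1 * φ t ^ 3 :=
    Nat.sq_le_mul_totient_pow_three_of_ordCompl Nat.prime_three (by norm_num) ht0
      (by simpa using hs)
  exact Nat.sq_le_mul_totient_pow_three_of_ordCompl (c := 4) Nat.prime_two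
    (by norm_num) hn hodd

theorem stmt_12_general (m : ℕ) :
    (m : ℝ) ≤ 3 * (Nat.totient m : ℝ) ^ (3 / 2 : ℝ) := by
  have hφ : (0 : ℝ) ≤ φ m := Nat.cast_nonneg _
  have hsq : (3 * (φ m : ℝ) ^ (3 / 2 : ℝ)) ^ 2 = 9 * (φ m : ℝ) ^ 3 := by
    rw [mul_pow, ← Real.rpow_natCast ((φ m : ℝ) ^ (3 / 2 : ℝ)) 2, ← Real.rpow_mul hφ]
    norm_num
  have key : (m : ℝ) ^ 2 ≤ 8 * (φ m : ℝ) ^ 3 := by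
    exact_mod_cast Nat.sq_le_eight_mul_totient_pow_three m
  refine (pow_le_pow_iff_left₀ (Nat.cast_nonneg m) (by positivity) two_ne_zero).mp ?_
  rw [hsq]
  linarith [pow_nonneg hφ 3]

/-- For every natural number `m ≥ 2`, `m ≤ 3 φ(m)^{3/2}`. -/
theorem stmt_12 (m : ℕ) (hm : 2 ≤ m) :
    (m : ℝ) ≤ 3 * (Nat.totient m : ℝ) ^ (3 / 2 : ℝ) :=
  stmt_12_general m
end

section
/- If q ∈ ℚ and tan²(qπ) ∈ ℚ ∪ {∞} (i.e., qπ is a pure geodetic angle with rational tangent squared), then tan(qπ) ∈ {0, ±√3, ±1/√3, ±1}. -/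
/-!
The identity `cos 2θ = (1 - tan² θ) / (1 + tan² θ)` makes `cos 2θ` rational, so by Niven's
theorem it is one of `0, ±1/2, ±1`. Solving for `tan² θ` leaves `0, 1/3, 1, 3` (`cos 2θ = -1`
is never attained), and taking square roots gives the seven tangents. When `cos θ = 0`, Lean's
`tan θ` is `0`.
-/

namespace Real

theorem cos_two_mul_eq_one_sub_tan_sq_div {x : ℝ} (hx : cos x ≠ 0) :
    cos (2 * x) = (1 - tan x ^ 2) / (1 + tan x ^ 2) := by
  rw [cos_two_mul, ← inv_one_add_tan_sq hx]
  field_simp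
  ring

theorem tan_sq_mem_of_rat_mul_pi {θ : ℝ} (hθ : ∃ r : ℚ, θ = r * π)
    (htan : ∃ q : ℚ, tan θ ^ 2 = q) : tan θ ^ 2 ∈ ({0, 1 / 3, 1, 3} : Set ℝ) := by
  by_cases hcos : cos θ = 0
  · simp [tan_eq_zero_of_cos_eq_zero hcos]
  obtain ⟨r, rfl⟩ := hθ
  obtain ⟨q, hq⟩ := htan
  have hcos2 := niven (θ := 2 * (r * π)) ⟨2 * r, by push_cast; ring⟩
    ⟨(1 - q) / (1 + q), by rw [cos_two_mul_eq_one_sub_tan_sq_div hcos, hq]; push_cast; rfl⟩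
  rw [cos_two_mul_eq_one_sub_tan_sq_div hcos] at hcos2
  have hpos : 0 < 1 + tan (r * π) ^ 2 := by positivity
  simp only [Set.mem_insert_iff, Set.mem_singleton_iff, div_eq_iff hpos.ne'] at hcos2 ⊢
  rcases hcos2 with h | h | h | h | h <;> [linarith; grind; grind; grind; grind]

theorem mem_of_sq_mem_zero_third_one_three {t : ℝ} (ht : t ^ 2 ∈ ({0, 1 / 3, 1, 3} : Set ℝ)) :
    t ∈ ({0, √3, -√3, 1 / √3, -(1 / √3), 1, -1} : Set ℝ) := by
  have h3 : √3 ^ 2 = 3 := sq_sqrt (by norm_num)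
  simp only [Set.mem_insert_iff, Set.mem_singleton_iff] at ht ⊢
  rcases ht with h | h | h | h
  · exact Or.inl (pow_eq_zero_iff two_ne_zero |>.mp h)
  · have : t ^ 2 = (1 / √3) ^ 2 := by rw [h, div_pow, h3]; norm_num
    rcases sq_eq_sq_iff_eq_or_eq_neg.mp this with h | h <;> simp [h]
  · rcases sq_eq_sq_iff_eq_or_eq_neg.mp (h.trans (one_pow 2).symm) with h | h <;> simp [h]
  · rcases sq_eq_sq_iff_eq_or_eq_neg.mp (h.trans h3.symm) with h | h <;> simp [h]

end Real

/-- If `q ∈ ℚ` and `tan²(qπ)` is rational or infinite (i.e. `cos(qπ) = 0`),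
then `tan(qπ) ∈ {0, ±√3, ±1/√3, ±1}`. -/
theorem stmt_15 (q : ℚ)
    (h : (∃ r : ℚ, (Real.tan (q * Real.pi)) ^ 2 = (r : ℝ)) ∨ Real.cos (q * Real.pi) = 0) :
    Real.tan (q * Real.pi) ∈
      ({0, Real.sqrt 3, -Real.sqrt 3, 1 / Real.sqrt 3, -(1 / Real.sqrt 3), 1, -1} : Set ℝ) := by
  refine Real.mem_of_sq_mem_zero_third_one_three (Real.tan_sq_mem_of_rat_mul_pi ⟨q, rfl⟩ ?_)
  rcases h with htan | hcos
  · exact htan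
  · exact ⟨0, by simp [Real.tan_eq_zero_of_cos_eq_zero hcos]⟩
end

section
/- Let k be a natural number with k ∉ {0, 2, 6}. Then arccos(√(2/(k+2))) is not a rational multiple of π. -/
open Complex in
lemma aux_root_of_unity_integral (q : ℚ) (s : ℝ) (hs : (s : ℂ) = 2 * (q : ℂ) * Real.pi) :
    IsIntegral ℤ ((2 * Real.cos s : ℝ) : ℂ) := by
  have hden : (0 : ℕ) < q.den := q.pos
  have hz : Complex.exp ((s : ℂ) * I) ^ q.den = 1 := by
    rw [← Complex.exp_nat_mul]
    have : (q.den : ℂ) * ((s : ℂ) * I) = (q.num : ℂ) * (2 * Real.pi * I) := by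
      rw [hs]
      have h1 : ((q.den : ℂ)) * (q : ℂ) = (q.num : ℂ) := by
        exact_mod_cast congrArg (Rat.cast : ℚ → ℂ) (Rat.den_mul_eq_num q)
      linear_combination (2 * (Real.pi : ℂ) * I) * h1
    rw [this]
    exact_mod_cast Complex.exp_int_mul_two_pi_mul_I q.num
  have hw : Complex.exp (-(s : ℂ) * I) ^ q.den = 1 := by
    rw [← Complex.exp_nat_mul]
    have : (q.den : ℂ) * (-(s : ℂ) * I) = (-q.num : ℂ) * (2 * Real.pi * I) := by
      rw [hs]
      have h1 : ((q.den : ℂ)) * (q : ℂ) = (q.num : ℂ) := by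
        exact_mod_cast congrArg (Rat.cast : ℚ → ℂ) (Rat.den_mul_eq_num q)
      linear_combination (-2 * (Real.pi : ℂ) * I) * h1
    rw [this]
    exact_mod_cast Complex.exp_int_mul_two_pi_mul_I (-q.num)
  have hiz : IsIntegral ℤ (Complex.exp ((s : ℂ) * I)) :=
    IsIntegral.of_pow hden (hz ▸ isIntegral_one)
  have hiw : IsIntegral ℤ (Complex.exp (-(s : ℂ) * I)) :=
    IsIntegral.of_pow hden (hw ▸ isIntegral_one)
  have heq : ((2 * Real.cos s : ℝ) : ℂ) =
      Complex.exp ((s : ℂ) * I) + Complex.exp (-(s : ℂ) * I) := by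
    push_cast
    rw [Complex.cos]
    ring
  rw [heq]
  exact hiz.add hiw

lemma aux_rat_two_cos (q : ℚ) (c : ℚ) (hc : (c : ℝ) = 2 * Real.cos (2 * (q : ℝ) * Real.pi)) :
    ∃ m : ℤ, (m : ℚ) = c := by
  have h := aux_root_of_unity_integral q (2 * (q : ℝ) * Real.pi) (by push_cast; ring)
  rw [hc.symm] at h
  have h2 : IsIntegral ℤ c := by
    have : ((c : ℝ) : ℂ) = algebraMap ℚ ℂ c := by norm_num
    rw [this] at h
    exact (isIntegral_algebraMap_iff ((algebraMap ℚ ℂ).injective)).mp h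
  obtain ⟨m, hm⟩ := IsIntegrallyClosed.isIntegral_iff.mp h2
  exact ⟨m, by exact_mod_cast hm⟩

/-- For a natural number `k ∉ {0, 2, 6}`, `arccos √(2/(k+2))` is not a
rational multiple of `π`. -/
theorem stmt_16 (k : ℕ) (hk : k ≠ 0 ∧ k ≠ 2 ∧ k ≠ 6) :
    ∀ q : ℚ, Real.arccos (Real.sqrt (2 / ((k : ℝ) + 2))) ≠ (q : ℝ) * Real.pi := by
  intro q h
  obtain ⟨hk0, hk2, hk6⟩ := hk
  have hk1 : 1 ≤ k := Nat.one_le_iff_ne_zero.mpr hk0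
  have hkpos : (0 : ℝ) < (k : ℝ) + 2 := by positivity
  have harg0 : (0 : ℝ) ≤ 2 / ((k : ℝ) + 2) := by positivity
  have harg1 : 2 / ((k : ℝ) + 2) ≤ 1 := by
    rw [div_le_one hkpos]
    have : (1 : ℝ) ≤ (k : ℝ) := by exact_mod_cast hk1
    linarith
  have hx0 : (0 : ℝ) ≤ Real.sqrt (2 / ((k : ℝ) + 2)) := Real.sqrt_nonneg _
  have hx1 : Real.sqrt (2 / ((k : ℝ) + 2)) ≤ 1 := by
    rw [show (1:ℝ) = Real.sqrt 1 by simp]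
    exact Real.sqrt_le_sqrt harg1
  have hcos : Real.cos ((q : ℝ) * Real.pi) = Real.sqrt (2 / ((k : ℝ) + 2)) := by
    rw [← h]; exact Real.cos_arccos (by linarith) hx1
  have hsq : Real.cos ((q : ℝ) * Real.pi) ^ 2 = 2 / ((k : ℝ) + 2) := by
    rw [hcos]; exact Real.sq_sqrt harg0
  set c : ℚ := 8 / ((k : ℚ) + 2) - 2 with hcdef
  have hkposq : (0 : ℚ) < (k : ℚ) + 2 := by positivity
  have hc : (c : ℝ) = 2 * Real.cos (2 * (q : ℝ) * Real.pi) := by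
    have h2 : Real.cos (2 * ((q : ℝ) * Real.pi)) =
        2 * Real.cos ((q : ℝ) * Real.pi) ^ 2 - 1 := Real.cos_two_mul _
    rw [hsq] at h2
    rw [mul_assoc, h2, hcdef]
    push_cast
    field_simp
    ring
  obtain ⟨m, hm⟩ := aux_rat_two_cos q c hc
  -- bound on m
  have hb : |(c : ℝ)| ≤ 2 := by
    rw [hc, abs_mul]
    have := Real.abs_cos_le_one (2 * (q : ℝ) * Real.pi)
    rw [abs_of_nonneg (by norm_num : (0:ℝ) ≤ 2)]
    nlinarith
  have hbq : |c| ≤ 2 := by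
    have : ((|c| : ℚ) : ℝ) ≤ ((2 : ℚ) : ℝ) := by push_cast; exact hb
    exact_mod_cast this
  have hmb : |m| ≤ 2 := by
    have : ((|m| : ℤ) : ℚ) ≤ ((2 : ℤ) : ℚ) := by push_cast; rw [hm]; exact hbq
    exact_mod_cast this
  -- algebraic equation
  have key : ((m : ℚ) + 2) * ((k : ℚ) + 2) = 8 := by
    rw [hm, hcdef]
    field_simp
    ring
  have keyz : ((m : ℤ) + 2) * ((k : ℤ) + 2) = 8 := by exact_mod_cast key
  obtain ⟨hm1, hm2⟩ := abs_le.mp hmb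
  interval_cases m <;> omega
end

section
/- Let θ_1, …, θ_n ∈ ℝ and σ_1, …, σ_n ∈ {0, 1}. Suppose that for every integer vector (ℓ_1, …, ℓ_n) with Σ ℓ_r θ_r = 0 one has Σ_{r: σ_r = 1} ℓ_r ≡ 0 (mod 2). Then for every ε > 0 there exists t ∈ ℝ such that |cos(t θ_r) - (-1)^{σ_r}| < ε for all r = 1, …, n. -/
/-!
Put `w r = σ r * π`; it suffices to make every `cos (t * θ r - w r)` exceed `1 - ε`.
If that fails for every `t`, then `P t = ∏ r, (1 + exp (i (t θ r - w r)))` satisfies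
`‖P t‖ ^ 2 ≤ 4 ^ n * (1 - ε / 2)` everywhere. Expanding `P ^ (2 j)` as an exponential sum, its
coefficients at the frequency `j * ∑ r, θ r` come from exponent vectors `m` with
`∑ r, (m r - j) * θ r = 0`, so by the hypothesis they all carry the same phase and add up to at
least `centralBinom j ^ n`. Averaging over `[0, T]` bounds that coefficient sum by the sup norm,
giving `centralBinom j ^ n ≤ (4 ^ n * (1 - ε / 2)) ^ j`, which fails for large `j` since
`centralBinom j ≥ 4 ^ j / (2 j)`.
-/

open Complex Filter Topology Finset
open scoped Real

lemma norm_average_integral_le {f : ℝ → ℂ} {M T : ℝ} (hT : 0 < T) (hf : ∀ t, ‖f t‖ ≤ M) :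
    ‖(T : ℂ)⁻¹ * ∫ t in (0:ℝ)..T, f t‖ ≤ M := by
  have hint : ‖∫ t in (0:ℝ)..T, f t‖ ≤ M * |T - 0| :=
    intervalIntegral.norm_integral_le_of_norm_le_const fun t _ => hf t
  rw [sub_zero, abs_of_pos hT] at hint
  rw [norm_mul, norm_inv, norm_real, Real.norm_of_nonneg hT.le]
  calc T⁻¹ * ‖∫ t in (0:ℝ)..T, f t‖ ≤ T⁻¹ * (M * T) := by gcongr
    _ = M := by field_simp

lemma norm_integral_exp_mul_I_le {δ : ℝ} (hδ : δ ≠ 0) (T : ℝ) :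
    ‖∫ t in (0:ℝ)..T, exp (δ * t * I)‖ ≤ 2 / |δ| := by
  have hc : (δ : ℂ) * I ≠ 0 := mul_ne_zero (ofReal_ne_zero.2 hδ) I_ne_zero
  have hint : ∫ t in (0:ℝ)..T, exp (δ * t * I) = (exp (δ * T * I) - 1) / (δ * I) := by
    simpa [mul_right_comm] using integral_exp_mul_complex hc (a := 0) (b := T)
  have hnum : ‖exp (δ * T * I) - 1‖ ≤ 2 := by
    calc ‖exp (δ * T * I) - 1‖ ≤ ‖exp (↑(δ * T) * I)‖ + ‖(1 : ℂ)‖ := by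
          push_cast; exact norm_sub_le _ _
      _ = 2 := by rw [norm_exp_ofReal_mul_I, norm_one]; norm_num
  rw [hint, norm_div, norm_mul, norm_real, norm_I, mul_one, Real.norm_eq_abs]
  gcongr

lemma tendsto_average_integral_exp_mul_I (δ : ℝ) :
    Tendsto (fun T : ℝ => (T : ℂ)⁻¹ * ∫ t in (0:ℝ)..T, exp (δ * t * I)) atTop
      (𝓝 (if δ = 0 then 1 else 0)) := by
  rcases eq_or_ne δ 0 with rfl | hδ
  · rw [if_pos rfl]
    refine tendsto_const_nhds.congr' ?_
    filter_upwards [eventually_gt_atTop 0] with T hT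
    simp [ofReal_ne_zero.2 hT.ne']
  · rw [if_neg hδ]
    refine squeeze_zero_norm' ?_ (by simpa using tendsto_inv_atTop_zero.const_mul (2 / |δ|))
    filter_upwards [eventually_gt_atTop 0] with T hT
    rw [norm_mul, norm_inv, norm_real, Real.norm_of_nonneg hT.le, mul_comm]
    gcongr
    exact norm_integral_exp_mul_I_le hδ T

lemma tendsto_average_integral_sum_exp_mul_I {ι : Type*} (s : Finset ι) (c : ι → ℂ) (β : ι → ℝ)
    (γ : ℝ) :
    Tendsto (fun T : ℝ => (T : ℂ)⁻¹ * ∫ t in (0:ℝ)..T,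
        (∑ m ∈ s, c m * exp (β m * t * I)) * exp (-γ * t * I)) atTop
      (𝓝 (∑ m ∈ s with β m = γ, c m)) := by
  have hexpand : ∀ T : ℝ, (T : ℂ)⁻¹ * (∫ t in (0:ℝ)..T,
        (∑ m ∈ s, c m * exp (β m * t * I)) * exp (-γ * t * I)) =
      ∑ m ∈ s, c m * ((T : ℂ)⁻¹ * ∫ t in (0:ℝ)..T, exp ((β m - γ : ℝ) * t * I)) := by
    intro T
    have hshift : ∀ t : ℝ, (∑ m ∈ s, c m * exp (β m * t * I)) * exp (-γ * t * I) =
        ∑ m ∈ s, c m * exp ((β m - γ : ℝ) * t * I) := fun t => by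
      rw [sum_mul]
      refine sum_congr rfl fun m _ => ?_
      rw [mul_assoc, ← exp_add]
      push_cast
      ring_nf
    simp_rw [hshift]
    rw [intervalIntegral.integral_finsetSum fun m _ =>
      (by fun_prop : Continuous fun t : ℝ => c m * exp ((β m - γ : ℝ) * t * I)).intervalIntegrable
        _ _, mul_sum]
    refine sum_congr rfl fun m _ => ?_
    rw [intervalIntegral.integral_const_mul]
    ring
  simp_rw [hexpand]
  rw [sum_filter]
  refine tendsto_finsetSum _ fun m _ => ?_
  convert (tendsto_average_integral_exp_mul_I (β m - γ)).const_mul (c m) using 2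
  simp [sub_eq_zero]

lemma norm_sum_filter_le_of_forall_norm_sum_exp_mul_I_le {ι : Type*} (s : Finset ι) (c : ι → ℂ)
    (β : ι → ℝ) (γ : ℝ) {M : ℝ} (hM : ∀ t : ℝ, ‖∑ m ∈ s, c m * exp (β m * t * I)‖ ≤ M) :
    ‖∑ m ∈ s with β m = γ, c m‖ ≤ M := by
  refine le_of_tendsto (tendsto_average_integral_sum_exp_mul_I s c β γ).norm ?_
  filter_upwards [eventually_gt_atTop 0] with T hT
  refine norm_average_integral_le hT fun t => ?_
  rw [norm_mul, ← ofReal_neg, ← ofReal_mul, norm_exp_ofReal_mul_I, mul_one]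
  exact hM t

lemma one_add_exp_mul_I_pow (x : ℝ) (k : ℕ) :
    (1 + exp (x * I)) ^ k = ∑ i ∈ range (k + 1), (k.choose i : ℂ) * exp ((i * x : ℝ) * I) := by
  rw [add_comm, add_pow]
  refine sum_congr rfl fun i _ => ?_
  rw [one_pow, mul_one, ← exp_nat_mul, mul_comm]
  push_cast
  ring_nf

lemma prod_one_add_exp_mul_I_pow {ι : Type*} [Fintype ι] [DecidableEq ι] (x : ι → ℝ) (k : ℕ) :
    (∏ r, (1 + exp (x r * I))) ^ k = ∑ m ∈ Fintype.piFinset fun _ => range (k + 1),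
      (∏ r, (k.choose (m r) : ℂ)) * exp ((∑ r, m r * x r : ℝ) * I) := by
  rw [← prod_pow]
  simp_rw [one_add_exp_mul_I_pow]
  rw [prod_univ_sum]
  refine sum_congr rfl fun m _ => ?_
  rw [prod_mul_distrib, ← exp_sum]
  push_cast
  rw [sum_mul]

lemma normSq_one_add_exp_mul_I (x : ℝ) : normSq (1 + exp (x * I)) = 2 + 2 * Real.cos x := by
  rw [exp_mul_I, ← ofReal_cos, ← ofReal_sin, ← add_assoc, ← ofReal_one, ← ofReal_add,
    normSq_add_mul_I]
  nlinarith [Real.sin_sq_add_cos_sq x]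

lemma normSq_prod_one_add_exp_mul_I_le {ι : Type*} [Fintype ι] (x : ι → ℝ) {r₀ : ι} {ε : ℝ}
    (h : Real.cos (x r₀) ≤ 1 - ε) :
    normSq (∏ r, (1 + exp (x r * I))) ≤ 4 ^ Fintype.card ι * (1 - ε / 2) := by
  classical
  rw [map_prod]
  calc ∏ r, normSq (1 + exp (x r * I)) ≤ ∏ r, 4 * (if r = r₀ then 1 - ε / 2 else 1) := by
        refine prod_le_prod (fun r _ => normSq_nonneg _) fun r _ => ?_
        rw [normSq_one_add_exp_mul_I]
        split_ifs with hr
        · subst hr; linarith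
        · linarith [Real.cos_le_one (x r)]
    _ = 4 ^ Fintype.card ι * (1 - ε / 2) := by
        rw [prod_mul_distrib, prod_const, prod_ite_eq' univ r₀, if_pos (mem_univ _), card_univ]

lemma exists_pow_lt_centralBinom_pow (n : ℕ) {c : ℝ} (hc₀ : 0 ≤ c) (hc₁ : c < 1) :
    ∃ j : ℕ, (4 ^ n * c) ^ j < (j.centralBinom : ℝ) ^ n := by
  have hlim : Tendsto (fun j : ℕ => 2 ^ n * ((j : ℝ) ^ n * c ^ j)) atTop (𝓝 0) := by
    simpa using (tendsto_pow_const_mul_const_pow_of_abs_lt_one n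
      (abs_lt.2 ⟨by linarith, hc₁⟩)).const_mul (2 ^ n)
  obtain ⟨j, hsmall, hj⟩ :=
    ((hlim.eventually (gt_mem_nhds one_pos)).and (eventually_gt_atTop 0)).exists
  refine ⟨j, lt_of_not_ge fun hle => ?_⟩
  have h4 : (4 : ℝ) ^ j ≤ 2 * j * j.centralBinom := by
    exact_mod_cast Nat.four_pow_le_two_mul_self_mul_centralBinom j hj
  have hgrowth : ((4 : ℝ) ^ n) ^ j ≤ 2 ^ n * ((j : ℝ) ^ n * c ^ j) * ((4 : ℝ) ^ n) ^ j :=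
    calc ((4 : ℝ) ^ n) ^ j = ((4 : ℝ) ^ j) ^ n := by rw [← pow_mul, ← pow_mul, mul_comm]
      _ ≤ (2 * j * j.centralBinom) ^ n := by gcongr
      _ = (2 * j) ^ n * (j.centralBinom : ℝ) ^ n := mul_pow _ _ _
      _ ≤ (2 * j) ^ n * (4 ^ n * c) ^ j := by gcongr
      _ = 2 ^ n * ((j : ℝ) ^ n * c ^ j) * ((4 : ℝ) ^ n) ^ j := by ring
  nlinarith [pow_pos (pow_pos (by norm_num : (0 : ℝ) < 4) n) j]

section Kronecker

variable {ι : Type*} [Fintype ι] {θ w : ι → ℝ}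

lemma exp_neg_sum_mul_I_eq_of_sum_eq
    (hcompat : ∀ ℓ : ι → ℤ, ∑ r, (ℓ r : ℝ) * θ r = 0 → ∃ d : ℤ, ∑ r, (ℓ r : ℝ) * w r = 2 * π * d)
    {m m' : ι → ℕ} (h : ∑ r, (m r : ℝ) * θ r = ∑ r, (m' r : ℝ) * θ r) :
    exp ((-∑ r, (m r : ℝ) * w r : ℝ) * I) = exp ((-∑ r, (m' r : ℝ) * w r : ℝ) * I) := by
  obtain ⟨d, hd⟩ := hcompat (fun r => m r - m' r) (by
    push_cast
    simp_rw [sub_mul]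
    rw [sum_sub_distrib, h, sub_self])
  push_cast at hd
  simp_rw [sub_mul] at hd
  rw [sum_sub_distrib] at hd
  rw [exp_eq_exp_iff_exists_int]
  refine ⟨-d, ?_⟩
  have hd' := congrArg (fun x : ℝ => (x : ℂ)) hd
  push_cast at hd' ⊢
  linear_combination (-I) * hd'

lemma centralBinom_pow_le_of_forall_exists_cos_le
    (hcompat : ∀ ℓ : ι → ℤ, ∑ r, (ℓ r : ℝ) * θ r = 0 → ∃ d : ℤ, ∑ r, (ℓ r : ℝ) * w r = 2 * π * d)
    {ε : ℝ} (hfail : ∀ t : ℝ, ∃ r, Real.cos (t * θ r - w r) ≤ 1 - ε) (j : ℕ) :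
    (j.centralBinom : ℝ) ^ Fintype.card ι ≤ (4 ^ Fintype.card ι * (1 - ε / 2)) ^ j := by
  classical
  set s := Fintype.piFinset fun _ : ι => range (2 * j + 1)
  set a : (ι → ℕ) → ℂ := fun m =>
    (∏ r, ((2 * j).choose (m r) : ℂ)) * exp ((-∑ r, (m r : ℝ) * w r : ℝ) * I)
  set β : (ι → ℕ) → ℝ := fun m => ∑ r, (m r : ℝ) * θ r
  set m₀ : ι → ℕ := fun _ => j
  have hsup : ∀ t : ℝ, ‖∑ m ∈ s, a m * exp (β m * t * I)‖ ≤
      (4 ^ Fintype.card ι * (1 - ε / 2)) ^ j := by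
    intro t
    obtain ⟨r₀, hr₀⟩ := hfail t
    have hpoly : ∑ m ∈ s, a m * exp (β m * t * I) =
        (∏ r, (1 + exp ((t * θ r - w r : ℝ) * I))) ^ (2 * j) := by
      rw [prod_one_add_exp_mul_I_pow]
      refine sum_congr rfl fun m _ => ?_
      have hfreq : (-∑ r, (m r : ℝ) * w r) + β m * t = ∑ r, (m r : ℝ) * (t * θ r - w r) := by
        simp only [β, sum_mul, ← sum_neg_distrib, ← sum_add_distrib]
        exact sum_congr rfl fun r _ => by ring
      rw [mul_assoc, ← exp_add, ← add_mul, ← ofReal_mul, ← ofReal_add, hfreq]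
    rw [hpoly, norm_pow, pow_mul, Complex.sq_norm]
    exact pow_le_pow_left₀ (normSq_nonneg _)
      (normSq_prod_one_add_exp_mul_I_le (fun r => t * θ r - w r) hr₀) j
  refine le_trans ?_ (norm_sum_filter_le_of_forall_norm_sum_exp_mul_I_le s a β (β m₀) hsup)
  have hphase : ∑ m ∈ s with β m = β m₀, a m =
      (∑ m ∈ s with β m = β m₀, ∏ r, ((2 * j).choose (m r) : ℝ) : ℝ) *
        exp ((-∑ r, (m₀ r : ℝ) * w r : ℝ) * I) := by
    rw [ofReal_sum, sum_mul]
    refine sum_congr rfl fun m hm => ?_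
    simp only [a, ofReal_prod, ofReal_natCast]
    rw [exp_neg_sum_mul_I_eq_of_sum_eq hcompat (mem_filter.1 hm).2]
  have hm₀ : m₀ ∈ s.filter fun m => β m = β m₀ :=
    mem_filter.2 ⟨Fintype.mem_piFinset.2 fun _ => mem_range.2 (show j < 2 * j + 1 by omega), rfl⟩
  rw [hphase, norm_mul, norm_exp_ofReal_mul_I, mul_one, norm_real,
    Real.norm_of_nonneg (by positivity)]
  calc (j.centralBinom : ℝ) ^ Fintype.card ι = ∏ r, ((2 * j).choose (m₀ r) : ℝ) := by
        simp [m₀, Nat.centralBinom]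
    _ ≤ _ := single_le_sum (f := fun m => ∏ r, ((2 * j).choose (m r) : ℝ))
        (fun m _ => by positivity) hm₀

theorem exists_forall_one_sub_lt_cos_mul_sub
    (hcompat : ∀ ℓ : ι → ℤ, ∑ r, (ℓ r : ℝ) * θ r = 0 → ∃ d : ℤ, ∑ r, (ℓ r : ℝ) * w r = 2 * π * d)
    {ε : ℝ} (hε : 0 < ε) : ∃ t : ℝ, ∀ r, 1 - ε < Real.cos (t * θ r - w r) := by
  by_contra! hfail
  have hε₂ : ε ≤ 2 := by
    obtain ⟨r, hr⟩ := hfail 0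
    linarith [Real.neg_one_le_cos (0 * θ r - w r)]
  obtain ⟨j, hj⟩ := exists_pow_lt_centralBinom_pow (Fintype.card ι) (c := 1 - ε / 2)
    (by linarith) (by linarith)
  exact hj.not_ge (centralBinom_pow_le_of_forall_exists_cos_le hcompat hfail j)

end Kronecker

lemma abs_cos_sub_neg_one_pow (x : ℝ) (k : ℕ) :
    |Real.cos x - (-1) ^ k| = 1 - Real.cos (x - k * π) := by
  rw [Real.cos_sub_nat_mul_pi]
  rcases neg_one_pow_eq_or ℝ k with h | h <;> rw [h]
  · rw [abs_of_nonpos (by linarith [Real.cos_le_one x])]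
    ring
  · rw [abs_of_nonneg (by linarith [Real.neg_one_le_cos x])]
    ring

/-- Kronecker-type approximation: if every integer relation
`Σ ℓ_r θ_r = 0` implies `Σ_{r : σ_r = 1} ℓ_r ≡ 0 (mod 2)`, then for every `ε > 0` there
is `t ∈ ℝ` with `|cos(t θ_r) - (-1)^{σ_r}| < ε` for all `r`. -/
theorem stmt_19 {n : ℕ} (θ : Fin n → ℝ) (σ : Fin n → ℕ) (hσ : ∀ r, σ r = 0 ∨ σ r = 1)
    (h : ∀ ℓ : Fin n → ℤ, (∑ r, (ℓ r : ℝ) * θ r) = 0 →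
      (2 : ℤ) ∣ ∑ r ∈ Finset.univ.filter (fun r => σ r = 1), ℓ r) :
    ∀ ε > 0, ∃ t : ℝ, ∀ r, |Real.cos (t * θ r) - (-1 : ℝ) ^ (σ r)| < ε := by
  intro ε hε
  have hcompat : ∀ ℓ : Fin n → ℤ, ∑ r, (ℓ r : ℝ) * θ r = 0 →
      ∃ d : ℤ, ∑ r, (ℓ r : ℝ) * (σ r * π) = 2 * π * d := by
    intro ℓ hℓ
    obtain ⟨d, hd⟩ := h ℓ hℓ
    refine ⟨d, ?_⟩
    have hodd : ∑ r, (ℓ r : ℝ) * (σ r * π) = (∑ r with σ r = 1, ℓ r : ℤ) * π := by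
      rw [Int.cast_sum, sum_filter, sum_mul]
      refine sum_congr rfl fun r _ => ?_
      rcases hσ r with h0 | h1 <;> simp [*]
    rw [hodd, hd]
    push_cast
    ring
  obtain ⟨t, ht⟩ := exists_forall_one_sub_lt_cos_mul_sub hcompat hε
  exact ⟨t, fun r => by linarith [ht r, abs_cos_sub_neg_one_pow (t * θ r) (σ r)]⟩
end
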